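/- Fix ν ∈ {0, …, 2g+1}. Over 𝔽₂, let U be the free module on E₀, …, E_{2g+1} and set f_i := E_ν + E_i. Define κ on an element A = Σ A_{p,q,r} f_p⊗f_q⊗f_r (indices ≠ ν) as ½·#{(p,q,r) : A_{p,q,r}=1, #{p,q,r}=2} mod ℤ, and κ' on the expansion A = Σ A'_{p,q,r} E_p⊗E_q⊗E_r as ½·#{(p,q,r) : A'_{p,q,r}=1, #{p,q,r}=2, p,q,r ≠ ν} mod ℤ. Then κ(A) = κ'(A) for every A in the span of the tensors f_p⊗f_q⊗f_r with p,q,r ≠ ν. -/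
import Mathlib


open TensorProduct

theorem stmt_18 (g : ℕ) (hg : 2 ≤ g) (ν : Fin (2 * g + 2))
    (E f : Fin (2 * g + 2) → (Fin (2 * g + 2) →₀ ZMod 2))
    (hE : ∀ i, E i = Finsupp.single i 1)
    (hf : ∀ i, f i = E ν + E i)
    (A : (Fin (2 * g + 2) →₀ ZMod 2) ⊗[ZMod 2]
        ((Fin (2 * g + 2) →₀ ZMod 2) ⊗[ZMod 2] (Fin (2 * g + 2) →₀ ZMod 2)))
    (Acoef A'coef : Fin (2 * g + 2) × Fin (2 * g + 2) × Fin (2 * g + 2) → ZMod 2)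
    (hAsupp : ∀ t : Fin (2 * g + 2) × Fin (2 * g + 2) × Fin (2 * g + 2),
      (t.1 = ν ∨ t.2.1 = ν ∨ t.2.2 = ν) → Acoef t = 0)
    (hA : A = ∑ t : Fin (2 * g + 2) × Fin (2 * g + 2) × Fin (2 * g + 2),
      Acoef t • (f t.1 ⊗ₜ[ZMod 2] (f t.2.1 ⊗ₜ[ZMod 2] f t.2.2)))
    (hA' : A = ∑ t : Fin (2 * g + 2) × Fin (2 * g + 2) × Fin (2 * g + 2),
      A'coef t • (E t.1 ⊗ₜ[ZMod 2] (E t.2.1 ⊗ₜ[ZMod 2] E t.2.2))) :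
    ((((Finset.univ.filter (fun t : Fin (2 * g + 2) × Fin (2 * g + 2) × Fin (2 * g + 2) =>
        Acoef t = 1 ∧ ({t.1, t.2.1, t.2.2} : Finset (Fin (2 * g + 2))).card = 2)).card : ℝ)
        / 2 : ℝ) : AddCircle (1 : ℝ))
    = ((((Finset.univ.filter (fun t : Fin (2 * g + 2) × Fin (2 * g + 2) × Fin (2 * g + 2) =>
        A'coef t = 1 ∧ ({t.1, t.2.1, t.2.2} : Finset (Fin (2 * g + 2))).card = 2 ∧
        t.1 ≠ ν ∧ t.2.1 ≠ ν ∧ t.2.2 ≠ ν)).card : ℝ) / 2 : ℝ) : AddCircle (1 : ℝ)) := by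
  have key : ∀ a b c : Fin (2 * g + 2), a ≠ ν → b ≠ ν → c ≠ ν →
      A'coef (a, b, c) = Acoef (a, b, c) := by
    intro a b c ha hb hc
    let ev : Fin (2 * g + 2) → (Fin (2 * g + 2) →₀ ZMod 2) →ₗ[ZMod 2] ZMod 2 :=
      fun i => Finsupp.lapply i
    let L : (Fin (2 * g + 2) →₀ ZMod 2) ⊗[ZMod 2]
        ((Fin (2 * g + 2) →₀ ZMod 2) ⊗[ZMod 2] (Fin (2 * g + 2) →₀ ZMod 2)) →ₗ[ZMod 2]
        ZMod 2 :=
      TensorProduct.lift (LinearMap.compl₁₂ (LinearMap.mul (ZMod 2) (ZMod 2)) (ev a)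
        (TensorProduct.lift (LinearMap.compl₁₂ (LinearMap.mul (ZMod 2) (ZMod 2)) (ev b) (ev c))))
    have hL : ∀ x y z : Fin (2 * g + 2) →₀ ZMod 2,
        L (x ⊗ₜ (y ⊗ₜ z)) = x a * (y b * z c) := by
      intro x y z
      simp [L, ev]
    have hEval : ∀ (p i : Fin (2 * g + 2)), (E p) i = if p = i then (1 : ZMod 2) else 0 := by
      intro p i; rw [hE]; simp [Finsupp.single_apply]
    have hfval : ∀ (p i : Fin (2 * g + 2)), i ≠ ν →
        (f p) i = if p = i then (1 : ZMod 2) else 0 := by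
      intro p i hi
      rw [hf, hE, hE]
      simp [Finsupp.single_apply, Ne.symm hi]
    have e1 : L A = Acoef (a, b, c) := by
      rw [hA, map_sum, Finset.sum_eq_single (a, b, c)]
      · rw [map_smul, hL, hfval _ _ ha, hfval _ _ hb, hfval _ _ hc]
        simp [smul_eq_mul]
      · rintro ⟨p, q, r⟩ _ ht
        rw [map_smul, hL, hfval _ _ ha, hfval _ _ hb, hfval _ _ hc]
        by_cases h1 : p = a
        · by_cases h2 : q = b
          · by_cases h3 : r = c
            · exact absurd (by rw [h1, h2, h3]) ht
            · rw [if_neg h3]; simp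
          · rw [if_neg h2]; simp
        · rw [if_neg h1]; simp
      · intro h; exact absurd (Finset.mem_univ _) h
    have e2 : L A = A'coef (a, b, c) := by
      rw [hA', map_sum, Finset.sum_eq_single (a, b, c)]
      · rw [map_smul, hL, hEval, hEval, hEval]
        simp [smul_eq_mul]
      · rintro ⟨p, q, r⟩ _ ht
        rw [map_smul, hL, hEval, hEval, hEval]
        by_cases h1 : p = a
        · by_cases h2 : q = b
          · by_cases h3 : r = c
            · exact absurd (by rw [h1, h2, h3]) ht
            · rw [if_neg h3]; simp
          · rw [if_neg h2]; simp
        · rw [if_neg h1]; simp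
      · intro h; exact absurd (Finset.mem_univ _) h
    rw [← e1, e2]
  have hsets : (Finset.univ.filter (fun t : Fin (2 * g + 2) × Fin (2 * g + 2) × Fin (2 * g + 2) =>
        Acoef t = 1 ∧ ({t.1, t.2.1, t.2.2} : Finset (Fin (2 * g + 2))).card = 2))
      = (Finset.univ.filter (fun t : Fin (2 * g + 2) × Fin (2 * g + 2) × Fin (2 * g + 2) =>
        A'coef t = 1 ∧ ({t.1, t.2.1, t.2.2} : Finset (Fin (2 * g + 2))).card = 2 ∧
        t.1 ≠ ν ∧ t.2.1 ≠ ν ∧ t.2.2 ≠ ν)) := by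
    apply Finset.filter_congr
    rintro ⟨p, q, r⟩ -
    constructor
    · rintro ⟨h1, h2⟩
      have hp : p ≠ ν := fun h => by simp [hAsupp (p, q, r) (Or.inl h)] at h1
      have hq : q ≠ ν := fun h => by simp [hAsupp (p, q, r) (Or.inr (Or.inl h))] at h1
      have hr : r ≠ ν := fun h => by simp [hAsupp (p, q, r) (Or.inr (Or.inr h))] at h1
      exact ⟨by rw [key p q r hp hq hr]; exact h1, h2, hp, hq, hr⟩
    · rintro ⟨h1, h2, hp, hq, hr⟩
      exact ⟨by rw [← key p q r hp hq hr]; exact h1, h2⟩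
  rw [hsets]
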